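/- arXiv:2106.14662 — 2 statements merged into one kernel-verified Lean document; each statement's English description precedes it below -/
import Mathlib

section
/- Let z* ∈ ℝ^L, let c be a fixed index, and let Δ_a = { z ∈ Δ^L : z_c ≥ z_l for all l } be the accuracy-preserving region of class c. The Euclidean projection of z* onto Δ_a, when z* ∈ Δ^L but z*_c is not maximal, is obtained by averaging z*_c with the top-l̃ largest components of z*, where l̃ is the smallest index such that the average of z*_c and the top l̃ components exceeds the (l̃+1)-st largest component; all averaged components are set to this common average and the rest are unchanged. The resulting vector z̃ satisfies z̃ ∈ Δ^L and z̃_c ≥ z̃_l for all l. -/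
/-- Accuracy-preserving projection (Algorithm 3.1 / Theorem 3.1):
Let `z* ∈ Δ^L` with `z*_c` not maximal. Let `T` be a block of indices
containing `c` together with top components of `z*` (every index of
`T \ {c}` dominates every index outside `T`), and let `ā` be the average of
`z*` over `T`. If `ā` strictly exceeds every component outside `T` (the
stopping condition of the loop) and `ā` does not exceed any of the averaged
top components (which holds for the smallest such block), then the vector
`z̃` obtained by setting all components in `T` to `ā` and keeping the rest
lies in `Δ^L`, has its maximum at `c`, and is the Euclidean projection of
`z*` onto the accuracy-preserving region
`Δ_a = {z ∈ Δ^L : z_c ≥ z_l ∀ l}`. -/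
theorem accuracy_preserving_projection (L : ℕ) (c : Fin L)
    (zstar : Fin L → ℝ)
    (h_nonneg : ∀ l, 0 ≤ zstar l) (h_sum : ∑ l, zstar l = 1)
    (h_not_max : ¬ ∀ l, zstar l ≤ zstar c)
    (T : Finset (Fin L)) (hcT : c ∈ T)
    (h_top : ∀ i ∈ T, i ≠ c → ∀ j ∉ T, zstar j ≤ zstar i)
    (abar : ℝ) (h_abar : abar = (∑ i ∈ T, zstar i) / T.card)
    (h_next : ∀ j ∉ T, zstar j < abar)
    (h_min : ∀ i ∈ T, i ≠ c → abar ≤ zstar i)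
    (ztilde : Fin L → ℝ)
    (h_ztilde : ∀ i, ztilde i = if i ∈ T then abar else zstar i) :
    (∀ i, 0 ≤ ztilde i) ∧ (∑ i, ztilde i = 1) ∧ (∀ l, ztilde l ≤ ztilde c) ∧
    (∀ y : Fin L → ℝ, (∀ i, 0 ≤ y i) → (∑ i, y i = 1) → (∀ l, y l ≤ y c) →
      ∑ i, (ztilde i - zstar i) ^ 2 ≤ ∑ i, (y i - zstar i) ^ 2) := by

  have hTne : T.Nonempty := ⟨c, hcT⟩
  have hcard : (0:ℝ) < T.card := by exact_mod_cast Finset.card_pos.mpr hTne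
  have hsumT : ∑ i ∈ T, zstar i = T.card * abar := by
    rw [h_abar]; field_simp
  have hsum0 : ∑ i ∈ T, (abar - zstar i) = 0 := by
    rw [Finset.sum_sub_distrib, hsumT, Finset.sum_const, nsmul_eq_mul]; ring
  have habar_nonneg : 0 ≤ abar := by
    rw [h_abar]
    exact div_nonneg (Finset.sum_nonneg fun i _ => h_nonneg i) (Nat.cast_nonneg _)
  have h1 : ∀ i, 0 ≤ ztilde i := by
    intro i; rw [h_ztilde i]
    split
    · exact habar_nonneg
    · exact h_nonneg i
  have hdiff : ∀ i, ztilde i - zstar i = if i ∈ T then abar - zstar i else 0 := by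
    intro i; rw [h_ztilde i]; by_cases h : i ∈ T <;> simp [h]
  have hsumdiff : ∑ i, (ztilde i - zstar i) = 0 := by
    calc ∑ i, (ztilde i - zstar i)
        = ∑ i ∈ Finset.univ, (if i ∈ T then abar - zstar i else 0) := by
          exact Finset.sum_congr rfl fun i _ => hdiff i
      _ = ∑ i ∈ T, (abar - zstar i) := by rw [Finset.sum_ite_mem, Finset.univ_inter]
      _ = 0 := hsum0
  have h2 : ∑ i, ztilde i = 1 := by
    have h' : ∑ i, (ztilde i - zstar i) = ∑ i, ztilde i - ∑ i, zstar i :=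
      Finset.sum_sub_distrib _ _
    rw [h'] at hsumdiff; linarith [h_sum]
  have h3 : ∀ l, ztilde l ≤ ztilde c := by
    intro l
    rw [h_ztilde l, h_ztilde c, if_pos hcT]
    by_cases h : l ∈ T
    · simp [h]
    · simp only [h, if_false]; exact le_of_lt (h_next l h)
  refine ⟨h1, h2, h3, ?_⟩
  intro y hy1 hy2 hy3
  -- key cross term
  have hterm : ∀ i, (y i - ztilde i) * (ztilde i - zstar i)
      = if i ∈ T then (y i - abar) * (abar - zstar i) else 0 := by
    intro i; rw [h_ztilde i]; by_cases h : i ∈ T <;> simp [h]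
  have hS : 0 ≤ ∑ i, (y i - ztilde i) * (ztilde i - zstar i) := by
    have e1 : ∑ i, (y i - ztilde i) * (ztilde i - zstar i)
        = ∑ i ∈ T, (y i - abar) * (abar - zstar i) := by
      calc ∑ i, (y i - ztilde i) * (ztilde i - zstar i)
          = ∑ i ∈ Finset.univ, (if i ∈ T then (y i - abar) * (abar - zstar i) else 0) :=
            Finset.sum_congr rfl fun i _ => hterm i
        _ = ∑ i ∈ T, (y i - abar) * (abar - zstar i) := by
            rw [Finset.sum_ite_mem, Finset.univ_inter]
    have e2 : ∑ i ∈ T, (y i - abar) * (abar - zstar i)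
        = ∑ i ∈ T, y i * (abar - zstar i) - abar * ∑ i ∈ T, (abar - zstar i) := by
      rw [Finset.mul_sum, ← Finset.sum_sub_distrib]
      exact Finset.sum_congr rfl fun i _ => by ring
    have e3 : ∑ i ∈ T, y i * (abar - zstar i)
        = y c * (abar - zstar c) + ∑ i ∈ T.erase c, y i * (abar - zstar i) :=
      (Finset.add_sum_erase T _ hcT).symm
    have e4 : abar - zstar c = - ∑ i ∈ T.erase c, (abar - zstar i) := by
      have := (Finset.add_sum_erase T (fun i => abar - zstar i) hcT).symm
      rw [this] at hsum0; linarith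
    have e5 : ∑ i ∈ T, y i * (abar - zstar i)
        = ∑ i ∈ T.erase c, (y i - y c) * (abar - zstar i) := by
      rw [e3, e4, mul_neg, Finset.mul_sum, neg_add_eq_sub, ← Finset.sum_sub_distrib]
      exact Finset.sum_congr rfl fun i _ => by ring
    have e6 : 0 ≤ ∑ i ∈ T.erase c, (y i - y c) * (abar - zstar i) := by
      apply Finset.sum_nonneg
      intro i hi
      have hiT := Finset.mem_of_mem_erase hi
      have hic := Finset.ne_of_mem_erase hi
      nlinarith [hy3 i, h_min i hiT hic]
    rw [e1, e2, hsum0, e5]; linarith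
  have expand : ∑ i, (y i - zstar i) ^ 2
      = ∑ i, (ztilde i - zstar i) ^ 2 + (∑ i, (y i - ztilde i) ^ 2
        + 2 * ∑ i, (y i - ztilde i) * (ztilde i - zstar i)) := by
    rw [Finset.mul_sum, ← Finset.sum_add_distrib, ← Finset.sum_add_distrib]
    exact Finset.sum_congr rfl fun i _ => by ring
  have hsq : 0 ≤ ∑ i, (y i - ztilde i) ^ 2 :=
    Finset.sum_nonneg fun i _ => sq_nonneg _
  rw [expand]; linarith
end

section
/- Let z* ∈ Δ^L with components sorted decreasingly as a_1 ≥ a_2 ≥ ... ≥ a_L, and let a_c be the component of a fixed index c (not the maximum). Suppose for some l̃ the value ā = (a_c + a_1 + ... + a_{l̃})/(l̃+1) satisfies ā > a_{l̃+1}. Then the vector z̃ obtained by replacing a_c, a_1, ..., a_{l̃} with ā and keeping other components lies in Δ^L (entries nonnegative, summing to 1) and its maximum component is attained at index c. -/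
/-- Feasibility of the block-averaging step: if `z* ∈ Δ^L`, `T` consists of
`c` together with top components, and the block average `ā` strictly exceeds
every component outside `T`, then the averaged vector lies in `Δ^L` and
attains its maximum at index `c`. -/
theorem block_average_feasible (L : ℕ) (c : Fin L)
    (zstar : Fin L → ℝ)
    (h_nonneg : ∀ l, 0 ≤ zstar l) (h_sum : ∑ l, zstar l = 1)
    (h_not_max : ¬ ∀ l, zstar l ≤ zstar c)
    (T : Finset (Fin L)) (hcT : c ∈ T)
    (h_top : ∀ i ∈ T, i ≠ c → ∀ j ∉ T, zstar j ≤ zstar i)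
    (abar : ℝ) (h_abar : abar = (∑ i ∈ T, zstar i) / T.card)
    (h_next : ∀ j ∉ T, zstar j < abar)
    (ztilde : Fin L → ℝ)
    (h_ztilde : ∀ i, ztilde i = if i ∈ T then abar else zstar i) :
    (∀ i, 0 ≤ ztilde i) ∧ (∑ i, ztilde i = 1) ∧ (∀ l, ztilde l ≤ ztilde c) := by
  have hcard : (0:ℝ) < T.card := by
    exact_mod_cast Finset.card_pos.mpr ⟨c, hcT⟩
  have habar0 : 0 ≤ abar := by
    rw [h_abar]
    exact div_nonneg (Finset.sum_nonneg fun i _ => h_nonneg i) hcard.le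
  refine ⟨fun i => ?_, ?_, fun l => ?_⟩
  · rw [h_ztilde]; split
    · exact habar0
    · exact h_nonneg i
  · have : ∑ i, ztilde i = ∑ i, (if i ∈ T then abar else zstar i) := by
      exact Finset.sum_congr rfl fun i _ => h_ztilde i
    rw [this, ← Finset.sum_add_sum_compl T]
    have h1 : ∑ i ∈ T, (if i ∈ T then abar else zstar i) = ∑ i ∈ T, abar :=
      Finset.sum_congr rfl fun i hi => if_pos hi
    have h2 : ∑ i ∈ Tᶜ, (if i ∈ T then abar else zstar i) = ∑ i ∈ Tᶜ, zstar i :=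
      Finset.sum_congr rfl fun i hi => if_neg (Finset.mem_compl.mp hi)
    rw [h1, h2, Finset.sum_const, nsmul_eq_mul, h_abar,
      mul_div_cancel₀ _ (ne_of_gt hcard), ← h_sum, ← Finset.sum_add_sum_compl T]
  · rw [h_ztilde l, h_ztilde c, if_pos hcT]
    split
    · exact le_refl _
    · exact (h_next l (by assumption)).le
end
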